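/- The submonoid L_+ of L generated by x_1,…,x_n,c satisfies L_+ ∩ (−L_+) = {0}; consequently the relation x ≤ y defined by y − x ∈ L_+ is a partial order on L. -/

import Mathlib

/-- The subgroup of relations `p i • x_i - c` in the free abelian group on `x_1,…,x_n,c`. -/
def Lrel (n : ℕ) (p : Fin n → ℤ) : AddSubgroup ((Fin n → ℤ) × ℤ) :=
  AddSubgroup.closure {v | ∃ i : Fin n, v = (Pi.single i (p i), -1)}

/-- The Geigle-Lenzing group `L = ⟨x_1,…,x_n,c⟩ / ⟨p_i x_i - c⟩`. -/
abbrev Lgrp (n : ℕ) (p : Fin n → ℤ) : Type :=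
  ((Fin n → ℤ) × ℤ) ⧸ Lrel n p

/-- The generator `x_i` of `L`. -/
def Lx (n : ℕ) (p : Fin n → ℤ) (i : Fin n) : Lgrp n p :=
  QuotientAddGroup.mk (Pi.single i 1, 0)

/-- The canonical element `c` of `L`. -/
def Lc (n : ℕ) (p : Fin n → ℤ) : Lgrp n p :=
  QuotientAddGroup.mk (0, 1)

/-- The positive cone `L_+`, the submonoid generated by `x_1,…,x_n,c`. -/
def Lplus (n : ℕ) (p : Fin n → ℤ) : AddSubmonoid (Lgrp n p) :=
  AddSubmonoid.closure (Set.range (Lx n p) ∪ {Lc n p})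

/-- The degree homomorphism on the free abelian group: `(v, m) ↦ ∑ v i / p i + m`. -/
def phi (n : ℕ) (p : Fin n → ℤ) : ((Fin n → ℤ) × ℤ) →+ ℚ where
  toFun v := (∑ i, (v.1 i : ℚ) / p i) + v.2
  map_zero' := by simp
  map_add' u v := by
    simp only [Prod.fst_add, Prod.snd_add, Pi.add_apply]
    push_cast
    simp [add_div, Finset.sum_add_distrib]
    ring

theorem phi_rel (n : ℕ) (p : Fin n → ℤ) (hp : ∀ i, 2 ≤ p i) :
    ∀ v ∈ Lrel n p, phi n p v = 0 := by
  intro v hv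
  refine AddSubgroup.closure_le (K := (phi n p).ker) |>.mpr ?_ hv
  rintro _ ⟨i, rfl⟩
  have hpi : (p i : ℚ) ≠ 0 := by
    have := hp i; exact_mod_cast by omega
  simp only [SetLike.mem_coe, AddMonoidHom.mem_ker]
  show (∑ j, ((Pi.single i (p i) : Fin n → ℤ) j : ℚ) / p j) + ((-1 : ℤ) : ℚ) = 0
  rw [Finset.sum_eq_single i]
  · simp [hpi]
  · intro j _ hj; simp [Pi.single_apply, hj]
  · simp

/-- The degree homomorphism on `L`. -/
def Ldeg (n : ℕ) (p : Fin n → ℤ) (hp : ∀ i, 2 ≤ p i) : Lgrp n p →+ ℚ :=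
  QuotientAddGroup.lift (Lrel n p) (phi n p) (phi_rel n p hp)

theorem Ldeg_Lx (n : ℕ) (p : Fin n → ℤ) (hp : ∀ i, 2 ≤ p i) (i : Fin n) :
    Ldeg n p hp (Lx n p i) = 1 / p i := by
  show phi n p (Pi.single i 1, 0) = 1 / p i
  show (∑ j, ((Pi.single i (1 : ℤ) : Fin n → ℤ) j : ℚ) / p j) + ((0 : ℤ) : ℚ) = 1 / p i
  rw [Finset.sum_eq_single i]
  · simp
  · intro j _ hj; simp [Pi.single_apply, hj]
  · simp

theorem Ldeg_Lc (n : ℕ) (p : Fin n → ℤ) (hp : ∀ i, 2 ≤ p i) :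
    Ldeg n p hp (Lc n p) = 1 := by
  show phi n p (0, 1) = 1
  show (∑ j, ((0 : Fin n → ℤ) j : ℚ) / p j) + ((1 : ℤ) : ℚ) = 1
  simp

theorem Ldeg_pos_of_mem (n : ℕ) (p : Fin n → ℤ) (hp : ∀ i, 2 ≤ p i)
    {x : Lgrp n p} (hx : x ∈ Lplus n p) :
    0 ≤ Ldeg n p hp x ∧ (Ldeg n p hp x = 0 → x = 0) := by
  induction hx using AddSubmonoid.closure_induction with
  | mem g hg =>
    have hpos : 0 < Ldeg n p hp g := by
      rcases hg with ⟨i, rfl⟩ | hg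
      · rw [Ldeg_Lx]
        have : (0 : ℚ) < p i := by exact_mod_cast lt_of_lt_of_le (by norm_num) (hp i)
        positivity
      · simp only [Set.mem_singleton_iff] at hg
        subst hg
        rw [Ldeg_Lc]; norm_num
    exact ⟨le_of_lt hpos, fun h => absurd h (ne_of_gt hpos)⟩
  | zero => simp
  | add a b _ _ ha hb =>
    refine ⟨by simpa using add_nonneg ha.1 hb.1, fun h => ?_⟩
    rw [map_add] at h
    have h1 : Ldeg n p hp a = 0 := le_antisymm (by linarith [ha.1, hb.1]) ha.1
    have h2 : Ldeg n p hp b = 0 := le_antisymm (by linarith [ha.1, hb.1]) hb.1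
    rw [ha.2 h1, hb.2 h2, add_zero]

/-- `L_+ ∩ (−L_+) = {0}`; consequently `x ≤ y ↔ y − x ∈ L_+` is a partial order on `L`. -/
theorem Lplus_inter_neg_eq_zero (n : ℕ) (hn : 1 ≤ n) (p : Fin n → ℤ)
    (hp : ∀ i, 2 ≤ p i) :
    (∀ x : Lgrp n p, x ∈ Lplus n p → -x ∈ Lplus n p → x = 0) ∧
      IsPartialOrder (Lgrp n p) (fun x y => y - x ∈ Lplus n p) := by
  have key : ∀ x : Lgrp n p, x ∈ Lplus n p → -x ∈ Lplus n p → x = 0 := by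
    intro x hx hnx
    have h1 := Ldeg_pos_of_mem n p hp hx
    have h2 := Ldeg_pos_of_mem n p hp hnx
    rw [map_neg] at h2
    exact h1.2 (le_antisymm (by linarith [h2.1]) h1.1)
  refine ⟨key,
    { refl := fun x => by simp [(Lplus n p).zero_mem]
      trans := fun x y z hxy hyz => by
        have := (Lplus n p).add_mem hyz hxy
        simpa [sub_add_sub_cancel] using this
      antisymm := fun x y hxy hyx => ?_ }⟩
  have h := key (y - x) hxy (by simpa [neg_sub] using hyx)
  have : y = x := by linear_combination (norm := abel) h
  exact this.symm
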